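/- The tetrahedron index satisfies, for all integers $m$ and $e$, the recursion $q^{e/2} I_\Delta(m+1,e) + q^{-m/2} I_\Delta(m,e+1) - I_\Delta(m,e) = 0$. -/

import Mathlib

/- We work with the formal variable `t = q^(1/2)`, so that `q = t^2` and
elements of `ℤ((q^(1/2)))` are described by their coefficient functions `ℤ → ℤ`
(coefficient of `t^k`).  The `q`-Pochhammer symbol `(q)_n = ∏_{i=1}^n (1-q^i)`
is a power series in `t` with constant term `1`, hence invertible. -/

/-- `(q)_n = ∏_{i=1}^n (1 - q^i)` as a power series in `t` with `q = t^2`. -/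
noncomputable def qPoch (n : ℕ) : PowerSeries ℤ :=
  ∏ i ∈ Finset.range n, (1 - (PowerSeries.X : PowerSeries ℤ) ^ (2 * (i + 1)))

/-- The inverse `1/(q)_n` (the constant term of `(q)_n` is `1`). -/
noncomputable def qPochInv (n : ℕ) : PowerSeries ℤ :=
  PowerSeries.invOfUnit (qPoch n) 1

/-- Coefficient of `t^k` in a power series in `t` (zero for negative `k`). -/
noncomputable def coeffZ (k : ℤ) (f : PowerSeries ℤ) : ℤ :=
  if 0 ≤ k then PowerSeries.coeff k.toNat f else 0

/-- Coefficient of `t^k` in the summand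
`S(m,e,n) = (-1)^n q^{n(n+1)/2 - (n+e/2)m} / ((q)_n (q)_{n+e})`
of the tetrahedron index, with the convention `1/(q)_n = 0` for `n < 0`.
(In `t`-units the exponent is `n(n+1) - (2n+e)m`.) -/
noncomputable def Scoeff (m e : ℤ) (n : ℕ) (k : ℤ) : ℤ :=
  if 0 ≤ (n : ℤ) + e then
    (-1) ^ n *
      coeffZ (k - ((n : ℤ) * (n + 1) - (2 * n + e) * m))
        (qPochInv n * qPochInv ((n : ℤ) + e).toNat)
  else 0

/-- Coefficient of `t^k` in the tetrahedron index `I_Δ(m,e)`; for fixed `k`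
only finitely many `n` contribute, so the `finsum` is the honest sum. -/
noncomputable def Icoeff (m e : ℤ) (k : ℤ) : ℤ :=
  ∑ᶠ n : ℕ, Scoeff m e n k

/-! Summand by summand, `q^{e/2} S(m+1,e,n) - S(m,e,n) = T(n)` (using
`(q)_n = (q)_{n-1} (1 - q^n)`) and `q^{-m/2} S(m,e+1,n) = -T(n+1)`, where
`T(n) = (-1)^n q^{n(n-1)/2 - (n+e/2)m} / ((q)_{n-1} (q)_{n+e})` for `n ≥ 1` and `T(0) = 0`.
So the recursion is a telescoping sum of `T`, which vanishes because each coefficient of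
`T(n)` is zero for large `n`. -/

open Filter Finset

lemma qPoch_constantCoeff (n : ℕ) : PowerSeries.constantCoeff (qPoch n) = 1 := by
  simp [qPoch, map_prod]

lemma qPoch_mul_qPochInv (n : ℕ) : qPoch n * qPochInv n = 1 :=
  PowerSeries.mul_invOfUnit _ _ (by simp [qPoch_constantCoeff])

lemma qPochInv_eq_mul_qPochInv_succ (n : ℕ) :
    qPochInv n = (1 - PowerSeries.X ^ (2 * (n + 1))) * qPochInv (n + 1) := by
  have hsucc : qPoch (n + 1) = qPoch n * (1 - PowerSeries.X ^ (2 * (n + 1))) :=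
    prod_range_succ _ _
  calc qPochInv n = qPochInv n * (qPoch (n + 1) * qPochInv (n + 1)) := by
        rw [qPoch_mul_qPochInv, mul_one]
    _ = qPoch n * qPochInv n * ((1 - PowerSeries.X ^ (2 * (n + 1))) * qPochInv (n + 1)) := by
        rw [hsucc]; ring
    _ = (1 - PowerSeries.X ^ (2 * (n + 1))) * qPochInv (n + 1) := by
        rw [qPoch_mul_qPochInv, one_mul]

lemma coeffZ_of_neg {k : ℤ} (hk : k < 0) (f : PowerSeries ℤ) : coeffZ k f = 0 :=
  if_neg (not_le.2 hk)

lemma coeffZ_sub (k : ℤ) (f g : PowerSeries ℤ) :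
    coeffZ k (f - g) = coeffZ k f - coeffZ k g := by
  unfold coeffZ
  split_ifs <;> simp

lemma coeffZ_X_pow_mul (k : ℤ) (d : ℕ) (f : PowerSeries ℤ) :
    coeffZ k (PowerSeries.X ^ d * f) = coeffZ (k - d) f := by
  unfold coeffZ
  by_cases hd : (d : ℤ) ≤ k
  · rw [if_pos (by omega), if_pos (by omega), show k.toNat = (k - d).toNat + d by omega,
      PowerSeries.coeff_X_pow_mul]
  · rw [if_neg (show ¬ 0 ≤ k - d by omega)]
    split_ifs
    · rw [PowerSeries.coeff_X_pow_mul', if_neg (by omega)]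
    · rfl

lemma eventually_lt_sq_add (a b c : ℤ) : ∀ᶠ n : ℕ in atTop, c < (n : ℤ) * n + a * n + b := by
  refine eventually_atTop.2 ⟨a.natAbs + b.natAbs + c.natAbs + 1, fun n hn => ?_⟩
  have hn' : (a.natAbs : ℤ) + b.natAbs + c.natAbs + 1 ≤ n := by exact_mod_cast hn
  have ha : -(a.natAbs : ℤ) * n ≤ a * n := mul_le_mul_of_nonneg_right (by omega) n.cast_nonneg
  nlinarith [Int.natCast_natAbs b, Int.natCast_natAbs c, le_abs_self c, neg_abs_le b]

noncomputable def Tcoeff (m e : ℤ) (n : ℕ) (k : ℤ) : ℤ :=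
  if 1 ≤ n ∧ 0 ≤ (n : ℤ) + e then
    (-1) ^ n *
      coeffZ (k - ((n : ℤ) * (n - 1) - (2 * n + e) * m))
        (qPochInv (n - 1) * qPochInv ((n : ℤ) + e).toNat)
  else 0

lemma Tcoeff_zero (m e k : ℤ) : Tcoeff m e 0 k = 0 :=
  if_neg (by omega)

lemma Scoeff_sub_Scoeff_eq_Tcoeff (m e : ℤ) (n : ℕ) (k : ℤ) :
    Scoeff (m + 1) e n (k - e) - Scoeff m e n k = Tcoeff m e n k := by
  unfold Scoeff Tcoeff
  by_cases he : 0 ≤ (n : ℤ) + e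
  · rw [if_pos he, if_pos he]
    cases n with
    | zero =>
      rw [if_neg (by omega)]
      push_cast
      rw [show k - e - (0 - (0 + e) * (m + 1)) = k - (0 - (0 + e) * m) by ring, sub_self]
    | succ p =>
      rw [if_pos ⟨by omega, he⟩, Nat.add_sub_cancel, qPochInv_eq_mul_qPochInv_succ p,
        sub_mul, one_mul, sub_mul, mul_assoc, coeffZ_sub, coeffZ_X_pow_mul]
      push_cast
      rw [show k - ((p + 1) * (p + 1 - 1) - (2 * (p + 1) + e) * m)
          = k - e - ((p + 1) * (p + 1 + 1) - (2 * (p + 1) + e) * (m + 1)) by ring,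
        show k - e - ((p + 1) * (p + 1 + 1) - (2 * (p + 1) + e) * (m + 1)) - 2 * (p + 1)
          = k - ((p + 1) * (p + 1 + 1) - (2 * (p + 1) + e) * m) by ring]
      ring
  · rw [if_neg he, if_neg he, if_neg (by tauto), sub_zero]

lemma Scoeff_add_one_eq_neg_Tcoeff (m e : ℤ) (n : ℕ) (k : ℤ) :
    Scoeff m (e + 1) n (k + m) = -Tcoeff m e (n + 1) k := by
  unfold Scoeff Tcoeff
  by_cases he : 0 ≤ (n : ℤ) + (e + 1)
  · rw [if_pos he, if_pos ⟨by omega, by push_cast; omega⟩, Nat.add_sub_cancel, pow_succ]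
    push_cast
    rw [show (n : ℤ) + (e + 1) = n + 1 + e by ring,
      show k + m - (n * (n + 1) - (2 * n + (e + 1)) * m)
        = k - ((n + 1) * (n + 1 - 1) - (2 * (n + 1) + e) * m) by ring]
    ring
  · rw [if_neg he, if_neg (by push_cast; omega), neg_zero]

lemma Scoeff_recursion (m e : ℤ) (n : ℕ) (k : ℤ) :
    Scoeff (m + 1) e n (k - e) + Scoeff m (e + 1) n (k + m) - Scoeff m e n k
      = Tcoeff m e n k - Tcoeff m e (n + 1) k := by
  rw [Scoeff_add_one_eq_neg_Tcoeff, ← Scoeff_sub_Scoeff_eq_Tcoeff m e n k]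
  ring

lemma Scoeff_eventually_eq_zero (m e k : ℤ) : ∀ᶠ n : ℕ in atTop, Scoeff m e n k = 0 := by
  filter_upwards [eventually_lt_sq_add (1 - 2 * m) (-(e * m)) k] with n hn
  unfold Scoeff
  split_ifs
  · rw [coeffZ_of_neg (by linarith), mul_zero]
  · rfl

lemma Tcoeff_eventually_eq_zero (m e k : ℤ) : ∀ᶠ n : ℕ in atTop, Tcoeff m e n k = 0 := by
  filter_upwards [eventually_lt_sq_add (-1 - 2 * m) (-(e * m)) k] with n hn
  unfold Tcoeff
  split_ifs
  · rw [coeffZ_of_neg (by linarith), mul_zero]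
  · rfl

lemma Icoeff_eventually_eq_sum (m e k : ℤ) :
    ∀ᶠ N : ℕ in atTop, Icoeff m e k = ∑ n ∈ range N, Scoeff m e n k := by
  obtain ⟨N₀, hN₀⟩ := eventually_atTop.1 (Scoeff_eventually_eq_zero m e k)
  filter_upwards [eventually_ge_atTop N₀] with N hN
  refine finsum_eq_sum_of_support_subset _ fun n hn => ?_
  by_contra hnN
  exact hn (hN₀ n (hN.trans (by simpa using hnN)))

/-- Coefficientwise in `t = q^{1/2}`: multiplying by `q^{e/2} = t^e` shifts the
coefficient index by `e`. -/
theorem tetrahedron_index_rec_one (m e k : ℤ) :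
    Icoeff (m + 1) e (k - e) + Icoeff m (e + 1) (k + m) - Icoeff m e k = 0 := by
  obtain ⟨N, hA, hB, hC, hT⟩ := ((Icoeff_eventually_eq_sum (m + 1) e (k - e)).and <|
    (Icoeff_eventually_eq_sum m (e + 1) (k + m)).and <|
    (Icoeff_eventually_eq_sum m e k).and (Tcoeff_eventually_eq_zero m e k)).exists
  rw [hA, hB, hC, ← sum_add_distrib, ← sum_sub_distrib,
    sum_congr rfl fun n _ => Scoeff_recursion m e n k, sum_range_sub', Tcoeff_zero, hT, sub_zero]
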